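/- arXiv:2312.02935 — 2 statements merged into one kernel-verified Lean document; each statement's English description precedes it below -/
import Mathlib

section
/- In the bivariate normal-normal model with positive definite Λ and Σ, the posterior variance of the sum δ₁+δ₂ under the decomposed bivariate model is at most the posterior variance of δ obtained from the univariate model applied to Δ = Δ₁+Δ₂, that is, 1ᵀ(I - Λ(Λ+Σ)⁻¹)Λ·1 ≤ λ²σ²/(λ²+σ²), where λ² = 1ᵀΛ1 and σ² = 1ᵀΣ1. -/
open Matrix

/-- the posterior variance of `δ₁+δ₂` in the decomposed bivariate model is at most
the posterior variance from the univariate model on the sum: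
`1ᵀ(I - Λ(Λ+Sig)⁻¹)Λ 1 ≤ λ²σ²/(λ²+σ²)` for positive definite `Λ, Sig`. -/
theorem bayesian_variance_reduction (Λ Sig : Matrix (Fin 2) (Fin 2) ℝ)
    (hΛ : Λ.PosDef) (hSig : Sig.PosDef) :
    let one : Fin 2 → ℝ := ![1, 1]
    let lam2 : ℝ := one ⬝ᵥ Λ *ᵥ one
    let sig2 : ℝ := one ⬝ᵥ Sig *ᵥ one
    one ⬝ᵥ ((1 - Λ * (Λ + Sig)⁻¹) * Λ) *ᵥ one ≤ lam2 * sig2 / (lam2 + sig2) := by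
  intro one lam2 sig2
  have hb : Λ 1 0 = Λ 0 1 := by simpa using (hΛ.isHermitian.apply 0 1)
  have hq : Sig 1 0 = Sig 0 1 := by simpa using (hSig.isHermitian.apply 0 1)
  have hd : 0 < (Λ + Sig).det := (hΛ.add hSig).det_pos
  have hlam : 0 < lam2 := by
    have := hΛ.dotProduct_mulVec_pos (x := ![1,1]) (by simp [funext_iff, Fin.forall_fin_two]); simpa [lam2, one] using this
  have hsig : 0 < sig2 := by
    have := hSig.dotProduct_mulVec_pos (x := ![1,1]) (by simp [funext_iff, Fin.forall_fin_two]); simpa [sig2, one] using this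
  have hinv : (Λ + Sig)⁻¹ = ((Λ+Sig).det)⁻¹ • (Λ+Sig).adjugate := by
    rw [Matrix.inv_def, Ring.inverse_eq_inv']
  obtain ⟨a, b, c, p, q, r, ha, hb', hc, hp, hq', hr⟩ :
      ∃ a b c p q r : ℝ, Λ 0 0 = a ∧ Λ 0 1 = b ∧ Λ 1 1 = c ∧ Sig 0 0 = p ∧ Sig 0 1 = q ∧
        Sig 1 1 = r := ⟨_, _, _, _, _, _, rfl, rfl, rfl, rfl, rfl, rfl⟩
  set e : ℝ := (a+p)*(c+r)-(b+q)*(b+q) with he_def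
  have hd' : 0 < e := by
    simpa [Matrix.det_fin_two, hb, hq, ha, hb', hc, hp, hq', hr, he_def] using hd
  have he : e ≠ 0 := ne_of_gt hd'
  have hlam' : lam2 = a + 2*b + c := by
    simp [lam2, one, dotProduct, Matrix.mulVec, Fin.sum_univ_two, hb, ha, hb', hc]; ring
  have hsig' : sig2 = p + 2*q + r := by
    simp [sig2, one, dotProduct, Matrix.mulVec, Fin.sum_univ_two, hq, hp, hq', hr]; ring
  set Q : ℝ := (a+b)^2*(c+r) - 2*(a+b)*(b+c)*(b+q) + (b+c)^2*(a+p) with hQ_def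
  have hLHS : one ⬝ᵥ ((1 - Λ * (Λ + Sig)⁻¹) * Λ) *ᵥ one = lam2 - Q/e := by
    rw [hinv]
    simp only [Matrix.adjugate_fin_two, Matrix.det_fin_two, Matrix.mul_apply, Matrix.mulVec,
      dotProduct, Fin.sum_univ_two, Matrix.one_apply, Matrix.sub_apply, Matrix.add_apply,
      Matrix.smul_apply, lam2, one, Matrix.cons_val_zero, Matrix.cons_val_one,
      Matrix.head_cons, smul_eq_mul, Matrix.of_apply, hb, hq, ha, hb', hc, hp, hq', hr]
    norm_num
    rw [hQ_def, ← he_def, div_eq_mul_inv]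
    ring
  rw [hLHS, le_div_iff₀ (by positivity)]
  clear_value lam2 sig2 e Q
  clear hinv hLHS hd hlam hsig
  have key : lam2^2 * e ≤ Q * (lam2 + sig2) := by
    rw [hlam', hsig', hQ_def, he_def]
    nlinarith [sq_nonneg ((a+b)*((b+q)+(c+r)) - (b+c)*((a+p)+(b+q)))]
  have h2 : (lam2 - Q/e)*(lam2+sig2)*e = lam2*(lam2+sig2)*e - Q*(lam2+sig2) := by
    field_simp
  have h3 : (lam2 - Q/e)*(lam2+sig2)*e ≤ lam2*sig2*e := by
    rw [h2]; nlinarith [key]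
  exact le_of_mul_le_mul_right h3 hd'
end

section
/- For symmetric positive definite n×n matrices Λ and Σ and any vector v, vᵀ(I - Λ(Λ+Σ)⁻¹)Λv ≤ (vᵀΛv)(vᵀΣv)/(vᵀΛv + vᵀΣv). -/
/-!
With `a = vᵀΛv`, `b = vᵀΣv` and `S = Λ + Σ`, the identity `(1 - ΛS⁻¹)Λ = Σ - ΣS⁻¹Σ` turns the
left-hand side into `b - (Σv)ᵀS⁻¹(Σv)`. Cauchy–Schwarz for the inner product given by `S`, applied
to `v` and `S⁻¹Σv`, gives `b² ≤ (a + b) · (Σv)ᵀS⁻¹(Σv)`, so the left-hand side is at most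
`b - b²/(a + b) = ab/(a + b)`.
-/

namespace Matrix

variable {ι R : Type*} [Fintype ι]

theorem one_sub_mul_nonsing_inv_add_mul [DecidableEq ι] [CommRing R] (A B : Matrix ι ι R)
    (h : IsUnit (A + B).det) :
    (1 - A * (A + B)⁻¹) * A = B - B * (A + B)⁻¹ * B := by
  have hleft : 1 - A * (A + B)⁻¹ = B * (A + B)⁻¹ := by
    rw [← mul_nonsing_inv _ h, add_mul, add_sub_cancel_left]
  calc (1 - A * (A + B)⁻¹) * A = B * (A + B)⁻¹ * ((A + B) - B) := by
        rw [hleft, add_sub_cancel_right]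
    _ = B - B * (A + B)⁻¹ * B := by
        rw [mul_sub, Matrix.mul_assoc B, nonsing_inv_mul _ h, Matrix.mul_one]

theorem IsSymm.dotProduct_mul_mul_self_mulVec [CommSemiring R] {B : Matrix ι ι R}
    (hB : B.IsSymm) (M : Matrix ι ι R) (v : ι → R) :
    v ⬝ᵥ (B * M * B) *ᵥ v = (B *ᵥ v) ⬝ᵥ M *ᵥ (B *ᵥ v) := by
  rw [← mulVec_mulVec, ← mulVec_mulVec, dotProduct_mulVec]
  congr 1
  rw [← vecMul_transpose, hB.eq]

theorem PosSemidef.dotProduct_mulVec_mul_le [CommRing R] [LinearOrder R] [IsStrictOrderedRing R]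
    [StarRing R] [TrivialStar R]
    {S : Matrix ι ι R} (hS : S.PosSemidef) (x y : ι → R) :
    (x ⬝ᵥ S *ᵥ y) * (y ⬝ᵥ S *ᵥ x) ≤ (x ⬝ᵥ S *ᵥ x) * (y ⬝ᵥ S *ᵥ y) := by
  classical
  simpa only [toBilin'_apply'] using (toBilin' S).apply_mul_apply_le_of_forall_zero_le
    (fun z ↦ by simpa only [toBilin'_apply', star_trivial] using hS.dotProduct_mulVec_nonneg z) x y

theorem PosDef.sq_dotProduct_le [DecidableEq ι] [Field R] [LinearOrder R] [IsStrictOrderedRing R]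
    [StarRing R] [TrivialStar R]
    {S : Matrix ι ι R} (hS : S.PosDef) (x y : ι → R) :
    (x ⬝ᵥ y) ^ 2 ≤ (x ⬝ᵥ S *ᵥ x) * (y ⬝ᵥ S⁻¹ *ᵥ y) := by
  have hsymm : S.IsSymm := isHermitian_iff_isSymm.mp hS.isHermitian
  set u := S⁻¹ *ᵥ y
  have hSu : S *ᵥ u = y := by
    rw [mulVec_mulVec, mul_nonsing_inv _ ((isUnit_iff_isUnit_det S).mp hS.isUnit), one_mulVec]
  have hcomm (w : ι → R) : w ⬝ᵥ S *ᵥ u = u ⬝ᵥ S *ᵥ w := by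
    rw [← dotProduct_transpose_mulVec, hsymm.eq]
  have hcs := hS.posSemidef.dotProduct_mulVec_mul_le x u
  rwa [← hcomm, hSu, ← sq, dotProduct_comm u] at hcs

end Matrix

open Matrix

/-- for symmetric positive definite `n×n` matrices `Λ, Sig` and any nonzero `v`,
`vᵀ(I - Λ(Λ+Sig)⁻¹)Λ v ≤ (vᵀΛv)(vᵀSigv)/(vᵀΛv + vᵀSigv)`. -/
theorem posterior_variance_bound {n : ℕ} (Λ Sig : Matrix (Fin n) (Fin n) ℝ)
    (hΛ : Λ.PosDef) (hSig : Sig.PosDef) (v : Fin n → ℝ) (hv : v ≠ 0) :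
    v ⬝ᵥ ((1 - Λ * (Λ + Sig)⁻¹) * Λ) *ᵥ v ≤
      (v ⬝ᵥ Λ *ᵥ v) * (v ⬝ᵥ Sig *ᵥ v) / (v ⬝ᵥ Λ *ᵥ v + v ⬝ᵥ Sig *ᵥ v) := by
  have hS : (Λ + Sig).PosDef := hΛ.add hSig
  have hcs := hS.sq_dotProduct_le v (Sig *ᵥ v)
  rw [add_mulVec, dotProduct_add] at hcs
  have hpos : 0 < v ⬝ᵥ Λ *ᵥ v + v ⬝ᵥ Sig *ᵥ v := by
    simpa only [star_trivial] using
      add_pos (hΛ.dotProduct_mulVec_pos hv) (hSig.dotProduct_mulVec_pos hv)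
  rw [one_sub_mul_nonsing_inv_add_mul Λ Sig ((isUnit_iff_isUnit_det _).mp hS.isUnit),
    sub_mulVec, dotProduct_sub,
    (isHermitian_iff_isSymm.mp hSig.isHermitian).dotProduct_mul_mul_self_mulVec, le_div_iff₀ hpos]
  linear_combination hcs
end
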